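/- (Kernel flow identity.) In the setting of the Hankel flow identity, with K_t = ℋ(b)ℋ(b)^⊤ and h_a^{(r)} = ℋ(b)ρ_a^{(r)}, one has for each 1 ≤ r ≤ M: ∂_{t_r} K_t = (S*)^r K_t - S^r K_t + K_t S^r - K_t (S*)^r - Σ_{a=0}^{r-1} [e_a (h_a^{(r)})^⊤ + h_a^{(r)} e_a^⊤], the derivative taken in trace norm. -/

import Mathlib

/-- The `k`-th Fourier coefficient of a function on the unit circle. -/
noncomputable def fc (f : ℂ → ℂ) (k : ℤ) : ℂ :=
  (2 * (Real.pi : ℂ) * Complex.I)⁻¹ * (∮ z in C(0, 1), f z * z ^ (-k - 1))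

/-- The Fourier coefficients `b_n(t)` of `b(z;t) = exp(Σ_{r=1}^M t_r(z^{-r} - z^r))`. -/
noncomputable def bcoef {M : ℕ} (t : Fin M → ℂ) (n : ℤ) : ℂ :=
  fc (fun z => Complex.exp
    (∑ r : Fin M, t r * (z ^ (-((r : ℤ) + 1)) - z ^ ((r : ℤ) + 1)))) n

/-- The kernel `K_t = ℋ(b)ℋ(b)^⊤`, with entries `K_t(i,j) = Σ_ℓ b_{i+ℓ+1} b_{j+ℓ+1}`. -/
noncomputable def Kmat {M : ℕ} (t : Fin M → ℂ) (i j : ℕ) : ℂ :=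
  ∑' ℓ : ℕ, bcoef t ((i : ℤ) + ℓ + 1) * bcoef t ((j : ℤ) + ℓ + 1)

/-- The vector `h_a^{(r)} = ℋ(b) ρ_a^{(r)}`, i.e. `h_a^{(r)}[m] = Σ_ℓ b_{m+ℓ+1} b_{ℓ+a+1-r}`. -/
noncomputable def hvec {M : ℕ} (t : Fin M → ℂ) (rr : ℕ) (a m : ℕ) : ℂ :=
  ∑' ℓ : ℕ, bcoef t ((m : ℤ) + ℓ + 1) * bcoef t ((ℓ : ℤ) + a + 1 - rr)

/-!
`b_n(t)` is the `n`-th Laurent coefficient of `b(z;t)`, and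
`∂_{t_r} b(z;t) = (z^{-r} - z^r) b(z;t)`, so differentiating under the contour integral gives
`∂_{t_r} b_n = b_{n+r} - b_{n-r}`. As `b(·;t)` is holomorphic on `ℂ ∖ {0}`, moving the contour to
`|z| = 2` gives `|b_n(t)| ≤ C 2^{-n}` with `C` locally uniform in `t`, so the series
`Σ_ℓ b_{c+ℓ} b_{d+ℓ}` may be differentiated termwise (the Leibniz rule). Of the four shifted
series this produces, each of the two shifted downwards is an entry of `K_t` when the shifted
index stays positive and an entry of some `h_a^{(r)}` when it does not.
-/

open Complex Metric Function Filter Topology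

namespace KernelFlow

section LaurentCoefficient

variable {f : ℂ → ℂ}

lemma fc_eq_circleIntegral (hf : DifferentiableOn ℂ f {0}ᶜ) {R : ℝ} (hR : 0 < R) (k : ℤ) :
    fc f k = (2 * (Real.pi : ℂ) * I)⁻¹ * ∮ z in C(0, R), f z * z ^ (-k - 1) := by
  have hg : DifferentiableOn ℂ (fun z => f z * z ^ (-k - 1)) {0}ᶜ := fun z hz =>
    (hf z hz).mul (differentiableAt_zpow.2 (Or.inl hz)).differentiableWithinAt
  have annulus : ∀ {a b : ℝ}, 0 < a → a ≤ b →
      (∮ z in C(0, b), f z * z ^ (-k - 1)) = ∮ z in C(0, a), f z * z ^ (-k - 1) := by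
    intro a b ha hab
    have hne : ∀ z ∉ ball (0 : ℂ) a, z ≠ 0 := fun z hz h0 => hz (h0 ▸ mem_ball_self ha)
    exact circleIntegral_eq_of_differentiable_on_annulus_off_countable ha hab Set.countable_empty
      (hg.continuousOn.mono fun z hz => hne z hz.2)
      fun z hz => hg.differentiableAt (isOpen_compl_singleton.mem_nhds (hne z fun h =>
        hz.1.2 (ball_subset_closedBall h)))
  rcases le_total 1 R with h | h
  · rw [fc, annulus one_pos h]
  · rw [fc, annulus hR h]

lemma norm_fc_le (hf : DifferentiableOn ℂ f {0}ᶜ) {R C : ℝ} (hR : 0 < R)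
    (hC : ∀ z ∈ sphere (0 : ℂ) R, ‖f z‖ ≤ C) (k : ℤ) : ‖fc f k‖ ≤ C * R ^ (-k) := by
  rw [fc_eq_circleIntegral hf hR, ← smul_eq_mul]
  refine (circleIntegral.norm_two_pi_i_inv_smul_integral_le_of_norm_le_const
    (C := C * R ^ (-k - 1)) hR.le fun z hz => ?_).trans_eq ?_
  · rw [norm_mul, norm_zpow, mem_sphere_zero_iff_norm.1 hz]
    exact mul_le_mul_of_nonneg_right (hC z hz) (by positivity)
  · rw [zpow_sub_one₀ hR.ne']
    field_simp

lemma fc_mul_zpow (f : ℂ → ℂ) (p k : ℤ) : fc (fun z => f z * z ^ p) k = fc f (k - p) := by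
  unfold fc
  congr 1
  refine circleIntegral.integral_congr zero_le_one fun z hz => ?_
  rw [mul_assoc, ← zpow_add₀ (ne_of_mem_sphere hz one_ne_zero)]
  ring_nf

lemma fc_sub {g : ℂ → ℂ} (hf : ContinuousOn f (sphere 0 1)) (hg : ContinuousOn g (sphere 0 1))
    (k : ℤ) : fc (fun z => f z - g z) k = fc f k - fc g k := by
  have hint : ∀ {h : ℂ → ℂ}, ContinuousOn h (sphere 0 1) →
      CircleIntegrable (fun z => h z * z ^ (-k - 1)) 0 1 := fun hh =>
    (hh.mul fun z hz => (continuousAt_zpow₀ _ _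
      (Or.inl (ne_of_mem_sphere hz one_ne_zero))).continuousWithinAt).circleIntegrable zero_le_one
  simp only [fc, sub_mul]
  rw [circleIntegral.integral_sub (hint hf) (hint hg), mul_sub]

lemma hasDerivAt_fc {F F' : ℂ → ℂ → ℂ} {s₀ : ℂ} {U : Set ℂ} {C : ℝ} (hU : U ∈ 𝓝 s₀)
    (hF : ∀ s, ContinuousOn (F s) (sphere 0 1)) (hF' : ContinuousOn (F' s₀) (sphere 0 1))
    (hderiv : ∀ s ∈ U, ∀ z ∈ sphere (0 : ℂ) 1, HasDerivAt (F · z) (F' s z) s)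
    (hbound : ∀ s ∈ U, ∀ z ∈ sphere (0 : ℂ) 1, ‖F' s z‖ ≤ C) (k : ℤ) :
    HasDerivAt (fun s => fc (F s) k) (fc (F' s₀) k) s₀ := by
  have hcirc : ∀ θ, circleMap 0 1 θ ∈ sphere (0 : ℂ) 1 := circleMap_mem_sphere 0 zero_le_one
  have hcont : ∀ {G : ℂ → ℂ}, ContinuousOn G (sphere 0 1) → Continuous fun θ =>
      deriv (circleMap 0 1) θ • (G (circleMap 0 1 θ) * circleMap 0 1 θ ^ (-k - 1)) := by
    intro G hG
    simp only [deriv_circleMap]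
    exact ((continuous_circleMap 0 1).mul continuous_const).smul
      ((hG.comp_continuous (continuous_circleMap 0 1) hcirc).mul
        ((continuous_circleMap 0 1).zpow₀ _ fun θ =>
          Or.inl (ne_of_mem_sphere (hcirc θ) one_ne_zero)))
  have key := intervalIntegral.hasDerivAt_integral_of_dominated_loc_of_deriv_le
    (μ := MeasureTheory.volume) (a := 0) (b := 2 * Real.pi) (bound := fun _ => C) hU
    (Eventually.of_forall fun s => (hcont (hF s)).aestronglyMeasurable)
    ((hcont (hF s₀)).intervalIntegrable _ _) (hcont hF').aestronglyMeasurable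
    (Eventually.of_forall fun θ _ s hs => ?_) intervalIntegrable_const
    (Eventually.of_forall fun θ _ s hs => ((hderiv s hs _ (hcirc θ)).mul_const _).fun_const_smul _)
  · exact key.2.const_mul _
  · simpa [deriv_circleMap, norm_smul, norm_zpow] using hbound s hs _ (hcirc θ)

noncomputable def zpowNegSub (k : ℤ) (z : ℂ) : ℂ := z ^ (-k) - z ^ k

lemma differentiableOn_zpowNegSub (k : ℤ) : DifferentiableOn ℂ (zpowNegSub k) {0}ᶜ :=
  fun _ hz => ((differentiableAt_zpow.2 (Or.inl hz)).sub
    (differentiableAt_zpow.2 (Or.inl hz))).differentiableWithinAt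

lemma norm_zpowNegSub_le (k : ℤ) (z : ℂ) : ‖zpowNegSub k z‖ ≤ ‖z‖ ^ (-k) + ‖z‖ ^ k := by
  rw [zpowNegSub, ← norm_zpow, ← norm_zpow]
  exact norm_sub_le _ _

lemma fc_mul_zpowNegSub {f : ℂ → ℂ} (hf : ContinuousOn f (sphere 0 1)) (k n : ℤ) :
    fc (fun z => f z * zpowNegSub k z) n = fc f (n + k) - fc f (n - k) := by
  have hzpow : ∀ p : ℤ, ContinuousOn (fun z : ℂ => f z * z ^ p) (sphere 0 1) := fun p =>
    hf.mul fun z hz => (continuousAt_zpow₀ _ _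
      (Or.inl (ne_of_mem_sphere hz one_ne_zero))).continuousWithinAt
  simp only [zpowNegSub, mul_sub]
  rw [fc_sub (hzpow _) (hzpow _), fc_mul_zpow, fc_mul_zpow, sub_neg_eq_add]

end LaurentCoefficient

theorem hasDerivAt_tsum_mul {𝕜 𝔸 : Type*} [RCLike 𝕜] [NormedRing 𝔸] [NormedAlgebra 𝕜 𝔸]
    [CompleteSpace 𝔸] {u v u' v' : ℕ → 𝕜 → 𝔸} {A B : ℕ → ℝ} {U : Set 𝕜} {x : 𝕜}
    (hU : IsOpen U) (hU' : IsPreconnected U) (hx : x ∈ U) (hAB : Summable fun n => A n * B n)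
    (hu : ∀ n, ∀ y ∈ U, HasDerivAt (u n) (u' n y) y)
    (hv : ∀ n, ∀ y ∈ U, HasDerivAt (v n) (v' n y) y)
    (hu_le : ∀ n, ∀ y ∈ U, ‖u n y‖ ≤ A n ∧ ‖u' n y‖ ≤ A n)
    (hv_le : ∀ n, ∀ y ∈ U, ‖v n y‖ ≤ B n ∧ ‖v' n y‖ ≤ B n) :
    HasDerivAt (fun y => ∑' n, u n y * v n y) (∑' n, (u' n x * v n x + u n x * v' n x)) x := by
  have hmul : ∀ {n} {a b : 𝔸}, ‖a‖ ≤ A n → ‖b‖ ≤ B n → ‖a * b‖ ≤ A n * B n := fun ha hb =>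
    (norm_mul_le _ _).trans (mul_le_mul ha hb (norm_nonneg _) ((norm_nonneg _).trans ha))
  refine hasDerivAt_tsum_of_isPreconnected (hAB.add hAB) hU hU'
    (fun n y hy => (hu n y hy).fun_mul (hv n y hy)) (fun n y hy => ?_) hx
    (.of_norm_bounded hAB fun n => hmul (hu_le n x hx).1 (hv_le n x hx).1) hx
  exact (norm_add_le _ _).trans (add_le_add (hmul (hu_le n y hy).2 (hv_le n y hy).1)
    (hmul (hu_le n y hy).1 (hv_le n y hy).2))

section Symbol

variable {M : ℕ}

noncomputable def symbol (t : Fin M → ℂ) (z : ℂ) : ℂ :=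
  exp (∑ r : Fin M, t r * zpowNegSub ((r : ℤ) + 1) z)

lemma bcoef_eq_fc_symbol (t : Fin M → ℂ) (n : ℤ) : bcoef t n = fc (symbol t) n := rfl

lemma differentiableOn_symbol (t : Fin M → ℂ) : DifferentiableOn ℂ (symbol t) {0}ᶜ :=
  (DifferentiableOn.fun_sum fun _ _ =>
    (differentiableOn_const _).mul (differentiableOn_zpowNegSub _)).cexp

lemma continuousOn_symbol (t : Fin M → ℂ) : ContinuousOn (symbol t) (sphere 0 1) :=
  (differentiableOn_symbol t).continuousOn.mono fun _ hz => ne_of_mem_sphere hz one_ne_zero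

lemma norm_symbol_le {t : Fin M → ℂ} {S R : ℝ} (hS : ∑ r, ‖t r‖ ≤ S) (hR : 1 ≤ R) {z : ℂ}
    (hz : ‖z‖ = R) : ‖symbol t z‖ ≤ Real.exp (2 * R ^ M * S) := by
  have hterm : ∀ r : Fin M, ‖zpowNegSub ((r : ℤ) + 1) z‖ ≤ 2 * R ^ M := by
    intro r
    have hneg : R ^ (-((r : ℤ) + 1)) ≤ 1 := zpow_le_one_of_nonpos₀ hR (by omega)
    have hpos : R ^ ((r : ℤ) + 1) ≤ R ^ M :=
      (zpow_le_zpow_right₀ hR (by omega)).trans_eq (zpow_natCast R M)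
    have := norm_zpowNegSub_le ((r : ℤ) + 1) z
    rw [hz] at this
    linarith [(one_le_pow₀ hR : (1 : ℝ) ≤ R ^ M)]
  rw [symbol, norm_exp]
  refine Real.exp_le_exp.2 ((re_le_norm _).trans ((norm_sum_le _ _).trans ?_))
  calc ∑ r, ‖t r * zpowNegSub ((r : ℤ) + 1) z‖ ≤ ∑ r, ‖t r‖ * (2 * R ^ M) :=
        Finset.sum_le_sum fun r _ => by
          rw [norm_mul]; exact mul_le_mul_of_nonneg_left (hterm r) (norm_nonneg _)
    _ = 2 * R ^ M * ∑ r, ‖t r‖ := by rw [← Finset.sum_mul, mul_comm]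
    _ ≤ 2 * R ^ M * S := mul_le_mul_of_nonneg_left hS (by positivity)

lemma norm_bcoef_le {t : Fin M → ℂ} {S : ℝ} (hS : ∑ r, ‖t r‖ ≤ S) (n : ℤ) :
    ‖bcoef t n‖ ≤ Real.exp (2 * 2 ^ M * S) * 2⁻¹ ^ n := by
  rw [bcoef_eq_fc_symbol, inv_zpow']
  exact norm_fc_le (differentiableOn_symbol t) two_pos
    (fun z hz => norm_symbol_le hS one_le_two (mem_sphere_zero_iff_norm.1 hz)) n

lemma norm_bcoef_le_geometric {t : Fin M → ℂ} {S : ℝ} (hS : ∑ r, ‖t r‖ ≤ S) {c m : ℤ} {ℓ : ℕ}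
    (h : c + ℓ ≤ m) : ‖bcoef t m‖ ≤ Real.exp (2 * 2 ^ M * S) * 2⁻¹ ^ c * 2⁻¹ ^ ℓ := by
  refine (norm_bcoef_le hS m).trans ?_
  rw [mul_assoc _ (2⁻¹ ^ c), ← zpow_natCast (2⁻¹ : ℝ) ℓ, ← zpow_add₀ (by norm_num)]
  exact mul_le_mul_of_nonneg_left (zpow_le_zpow_right_of_le_one₀ (by norm_num) (by norm_num) h)
    (Real.exp_pos _).le

lemma sum_norm_update_le (t : Fin M → ℂ) (r : Fin M) (s : ℂ) :
    ∑ r', ‖update t r s r'‖ ≤ ∑ r', ‖t r'‖ + ‖s - t r‖ := by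
  have hterm : ∀ r', ‖update t r s r'‖ ≤ ‖t r'‖ + if r' = r then ‖s - t r‖ else 0 := by
    intro r'
    rcases eq_or_ne r' r with rfl | h
    · simpa using norm_le_norm_add_norm_sub' s (t r')
    · simp [h]
  refine (Finset.sum_le_sum fun r' _ => hterm r').trans_eq ?_
  rw [Finset.sum_add_distrib, Finset.sum_ite_eq']
  simp

lemma sum_norm_update_le_of_mem_ball {t : Fin M → ℂ} {r : Fin M} {s : ℂ} (hs : s ∈ ball (t r) 1) :
    ∑ r', ‖update t r s r'‖ ≤ ∑ r', ‖t r'‖ + 1 :=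
  (sum_norm_update_le t r s).trans (add_le_add_right (mem_ball_iff_norm.1 hs).le _)

lemma hasDerivAt_symbol_update (t : Fin M → ℂ) (r : Fin M) (s z : ℂ) :
    HasDerivAt (fun s => symbol (update t r s) z)
      (symbol (update t r s) z * zpowNegSub ((r : ℤ) + 1) z) s := by
  have hsum : ∀ s', ∑ r', update t r s' r' * zpowNegSub ((r' : ℤ) + 1) z
      = ∑ r', t r' * zpowNegSub ((r' : ℤ) + 1) z + (s' - t r) * zpowNegSub ((r : ℤ) + 1) z := by
    intro s'
    rw [← Finset.add_sum_erase _ _ (Finset.mem_univ r),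
      ← Finset.add_sum_erase _ _ (Finset.mem_univ r), update_self,
      Finset.sum_congr rfl fun r' h => by rw [update_of_ne (Finset.ne_of_mem_erase h)]]
    ring
  simp only [symbol, hsum]
  simpa using ((((hasDerivAt_id s).sub_const (t r)).mul_const
    (zpowNegSub ((r : ℤ) + 1) z)).const_add _).cexp

lemma hasDerivAt_bcoef_update (t : Fin M → ℂ) (r : Fin M) (n : ℤ) :
    HasDerivAt (fun s => bcoef (update t r s) n)
      (bcoef t (n + ((r : ℤ) + 1)) - bcoef t (n - ((r : ℤ) + 1))) (t r) := by
  have hbound : ∀ s ∈ ball (t r) 1, ∀ z ∈ sphere (0 : ℂ) 1,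
      ‖symbol (update t r s) z * zpowNegSub ((r : ℤ) + 1) z‖
        ≤ Real.exp (2 * 1 ^ M * (∑ r', ‖t r'‖ + 1)) * (1 + 1) := by
    intro s hs z hz
    have hz : ‖z‖ = 1 := mem_sphere_zero_iff_norm.1 hz
    rw [norm_mul]
    refine mul_le_mul (norm_symbol_le (sum_norm_update_le_of_mem_ball hs) le_rfl hz) ?_
      (norm_nonneg _) (Real.exp_pos _).le
    simpa [hz] using norm_zpowNegSub_le ((r : ℤ) + 1) z
  have h := hasDerivAt_fc (ball_mem_nhds (t r) one_pos) (fun s => continuousOn_symbol _)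
    ((continuousOn_symbol _).mul ((differentiableOn_zpowNegSub _).continuousOn.mono
      fun _ hz => ne_of_mem_sphere hz one_ne_zero))
    (fun s _ z _ => hasDerivAt_symbol_update t r s z) hbound n
  simp only [bcoef_eq_fc_symbol]
  rwa [update_eq_self, fc_mul_zpowNegSub (continuousOn_symbol t)] at h

end Symbol

section Correlation

variable {M : ℕ}

noncomputable def bcoefCorr (t : Fin M → ℂ) (c d : ℤ) : ℂ :=
  ∑' ℓ : ℕ, bcoef t (c + ℓ) * bcoef t (d + ℓ)

lemma bcoefCorr_comm (t : Fin M → ℂ) (c d : ℤ) : bcoefCorr t c d = bcoefCorr t d c := by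
  simp only [bcoefCorr, mul_comm]

lemma summable_geometric_inv_two_mul (a b : ℝ) :
    Summable fun ℓ : ℕ => a * 2⁻¹ ^ ℓ * (b * 2⁻¹ ^ ℓ) :=
  ((summable_geometric_of_lt_one (by norm_num : (0 : ℝ) ≤ 2⁻¹ * 2⁻¹) (by norm_num)).mul_left
    (a * b)).congr fun ℓ => by rw [mul_pow]; ring

lemma summable_bcoef_mul (t : Fin M → ℂ) (c d : ℤ) :
    Summable fun ℓ : ℕ => bcoef t (c + ℓ) * bcoef t (d + ℓ) := by
  set E := Real.exp (2 * 2 ^ M * ∑ r, ‖t r‖)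
  refine .of_norm_bounded (summable_geometric_inv_two_mul (E * 2⁻¹ ^ c) (E * 2⁻¹ ^ d)) fun ℓ => ?_
  rw [norm_mul]
  exact mul_le_mul (norm_bcoef_le_geometric le_rfl le_rfl)
    (norm_bcoef_le_geometric le_rfl le_rfl) (norm_nonneg _) (by positivity)

theorem hasDerivAt_bcoefCorr (t : Fin M → ℂ) (r : Fin M) (c d : ℤ) :
    HasDerivAt (fun s => bcoefCorr (update t r s) c d)
      (bcoefCorr t (c + ((r : ℤ) + 1)) d - bcoefCorr t (c - ((r : ℤ) + 1)) d
        + (bcoefCorr t c (d + ((r : ℤ) + 1)) - bcoefCorr t c (d - ((r : ℤ) + 1)))) (t r) := by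
  set k : ℤ := (r : ℤ) + 1
  set E := Real.exp (2 * 2 ^ M * (∑ r', ‖t r'‖ + 1))
  have hderiv : ∀ (e : ℤ) (ℓ : ℕ), ∀ s ∈ ball (t r) 1,
      HasDerivAt (fun s => bcoef (update t r s) (e + ℓ))
        (bcoef (update t r s) (e + k + ℓ) - bcoef (update t r s) (e - k + ℓ)) s := by
    intro e ℓ s _
    have h := hasDerivAt_bcoef_update (update t r s) r (e + ℓ)
    simp only [update_idem, update_self] at h
    rwa [add_right_comm e k, sub_add_eq_add_sub e k]
  have hbound : ∀ (e : ℤ) (ℓ : ℕ), ∀ s ∈ ball (t r) 1,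
      ‖bcoef (update t r s) (e + ℓ)‖ ≤ 2 * E * 2⁻¹ ^ (e - k) * 2⁻¹ ^ ℓ ∧
      ‖bcoef (update t r s) (e + k + ℓ) - bcoef (update t r s) (e - k + ℓ)‖
        ≤ 2 * E * 2⁻¹ ^ (e - k) * 2⁻¹ ^ ℓ := by
    intro e ℓ s hs
    have hb : ∀ m, e - k + ℓ ≤ m → ‖bcoef (update t r s) m‖ ≤ E * 2⁻¹ ^ (e - k) * 2⁻¹ ^ ℓ :=
      fun m hm => norm_bcoef_le_geometric (sum_norm_update_le_of_mem_ball hs) hm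
    have hE : 0 ≤ E * 2⁻¹ ^ (e - k) * 2⁻¹ ^ ℓ := by positivity
    constructor
    · linarith [hb (e + ℓ) (by omega)]
    · linarith [norm_sub_le (bcoef (update t r s) (e + k + ℓ)) (bcoef (update t r s) (e - k + ℓ)),
        hb (e + k + ℓ) (by omega), hb (e - k + ℓ) le_rfl]
  have h := hasDerivAt_tsum_mul isOpen_ball (convex_ball _ _).isPreconnected
    (mem_ball_self one_pos) (summable_geometric_inv_two_mul _ _) (hderiv c) (hderiv d)
    (hbound c) (hbound d)
  have hs := summable_bcoef_mul t
  rw [update_eq_self] at h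
  simp only [sub_mul, mul_sub] at h
  rwa [((hs _ _).sub (hs _ _)).tsum_add ((hs _ _).sub (hs _ _)), (hs _ _).tsum_sub (hs _ _),
    (hs _ _).tsum_sub (hs _ _)] at h

lemma kmat_eq_bcoefCorr (t : Fin M → ℂ) (i j : ℕ) : Kmat t i j = bcoefCorr t (i + 1) (j + 1) :=
  tsum_congr fun ℓ => by rw [add_right_comm (i : ℤ), add_right_comm (j : ℤ)]

lemma kmat_comm (t : Fin M → ℂ) (i j : ℕ) : Kmat t i j = Kmat t j i := by
  rw [kmat_eq_bcoefCorr, kmat_eq_bcoefCorr, bcoefCorr_comm]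

lemma bcoefCorr_natCast_add_one_add (t : Fin M → ℂ) (i j k : ℕ) :
    bcoefCorr t ((i : ℤ) + 1 + k) (j + 1) = Kmat t (i + k) j := by
  rw [kmat_eq_bcoefCorr]
  push_cast
  ring_nf

lemma bcoefCorr_natCast_add_one_sub (t : Fin M → ℂ) (i j k : ℕ) :
    bcoefCorr t ((i : ℤ) + 1 - k) (j + 1)
      = (if k ≤ i then Kmat t (i - k) j else 0) + (if i < k then hvec t k i j else 0) := by
  rcases le_or_gt k i with h | h
  · rw [if_pos h, if_neg h.not_gt, add_zero, kmat_eq_bcoefCorr]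
    congr 1
    omega
  · rw [if_neg h.not_ge, if_pos h, zero_add, bcoefCorr_comm]
    exact tsum_congr fun ℓ => by congr 2 <;> ring

end Correlation

end KernelFlow

open KernelFlow

/-- Kernel flow identity:
`∂_{t_r} K_t = (S*)^r K_t - S^r K_t + K_t S^r - K_t (S*)^r - Σ_{a=0}^{r-1}[e_a (h_a^{(r)})^⊤ +
h_a^{(r)} e_a^⊤]`, written entrywise. -/
theorem kernel_flow {M : ℕ} (t : Fin M → ℂ) (r : Fin M) (i j : ℕ) :
    HasDerivAt
      (fun s : ℂ => Kmat (Function.update t r s) i j)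
      (Kmat t (i + ((r : ℕ) + 1)) j
        - (if (r : ℕ) + 1 ≤ i then Kmat t (i - ((r : ℕ) + 1)) j else 0)
        + Kmat t i (j + ((r : ℕ) + 1))
        - (if (r : ℕ) + 1 ≤ j then Kmat t i (j - ((r : ℕ) + 1)) else 0)
        - ((if i < (r : ℕ) + 1 then hvec t ((r : ℕ) + 1) i j else 0)
            + (if j < (r : ℕ) + 1 then hvec t ((r : ℕ) + 1) j i else 0)))
      (t r) := by
  have hk : (r : ℤ) + 1 = (((r : ℕ) + 1 : ℕ) : ℤ) := by push_cast; rfl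
  have h := hasDerivAt_bcoefCorr t r ((i : ℤ) + 1) ((j : ℤ) + 1)
  rw [hk, bcoefCorr_natCast_add_one_add, bcoefCorr_natCast_add_one_sub,
    bcoefCorr_comm t ((i : ℤ) + 1), bcoefCorr_comm t ((i : ℤ) + 1),
    bcoefCorr_natCast_add_one_add, bcoefCorr_natCast_add_one_sub, kmat_comm t (j + _),
    kmat_comm t (j - _)] at h
  convert h using 1
  · exact funext fun s => kmat_eq_bcoefCorr _ i j
  · ring
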